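/- arXiv:2210.06718 — 6 statements merged into one kernel-verified Lean document; each statement's English description precedes it below -/
import Mathlib

section
/- Performance difference lemma: For any tuple f = (f_0,…,f_{H−1}) of functions f_h : S×A → ℝ (with the convention f_H ≡ 0) and its greedy policy π^f, one has Σ_s d_0(s)·(max_a f_0(s,a) − V^{π^f}_0(s)) ≤ Σ_{h=0}^{H−1} | Σ_{s,a} d^{π^f}_h(s,a)·( f_h(s,a) − (T_h f_{h+1})(s,a) ) |. -/
open Finset
open scoped Classical

/-- Max over the (finite, nonempty) action space. -/
noncomputable def supA {A : Type*} [Fintype A] [Nonempty A] (g : A → ℝ) : ℝ :=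
  Finset.univ.sup' Finset.univ_nonempty g

/-- An action achieving the maximum of `g`. -/
noncomputable def argmaxA {A : Type*} [Fintype A] [Nonempty A] (g : A → ℝ) : A :=
  Classical.choose (Finset.exists_mem_eq_sup' (Finset.univ_nonempty (α := A)) g)

/-- Bellman optimality operator at step `h` applied to `g : S × A → ℝ`. -/
noncomputable def bellman {S A : Type*} [Fintype S] [Fintype A] [Nonempty A]
    (P : ℕ → S → A → S → ℝ) (r : ℕ → S → A → ℝ) (h : ℕ)
    (g : S → A → ℝ) (s : S) (a : A) : ℝ :=
  r h s a + ∑ s', P h s a s' * supA (g s')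

/-- Auxiliary value function, by recursion on the number of remaining steps. -/
noncomputable def Vaux {S A : Type*} [Fintype S] [Fintype A]
    (P : ℕ → S → A → S → ℝ) (r : ℕ → S → A → ℝ) (π : ℕ → S → A → ℝ) (H : ℕ) :
    ℕ → S → ℝ
  | 0, _ => 0
  | k + 1, s => ∑ a, π (H - (k + 1)) s a *
      (r (H - (k + 1)) s a + ∑ s', P (H - (k + 1)) s a s' * Vaux P r π H k s')

/-- Value function `V^π_h(s)` of policy `π` (with `V^π_H ≡ 0`). -/
noncomputable def Vval {S A : Type*} [Fintype S] [Fintype A]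
    (P : ℕ → S → A → S → ℝ) (r : ℕ → S → A → ℝ) (π : ℕ → S → A → ℝ)
    (H h : ℕ) (s : S) : ℝ :=
  Vaux P r π H (H - h) s

/-- Occupancy measure `d^π_h(s,a)`. -/
noncomputable def occ {S A : Type*} [Fintype S] [Fintype A]
    (P : ℕ → S → A → S → ℝ) (d0 : S → ℝ) (π : ℕ → S → A → ℝ) :
    ℕ → S → A → ℝ
  | 0, s, a => d0 s * π 0 s a
  | h + 1, s', a' => (∑ s, ∑ a, occ P d0 π h s a * P h s a s') * π (h + 1) s' a'

/-- The deterministic greedy policy w.r.t. the tuple `f`. -/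
noncomputable def greedy {S A : Type*} [Fintype A] [Nonempty A]
    (f : ℕ → S → A → ℝ) (h : ℕ) (s : S) (a : A) : ℝ :=
  if a = argmaxA (f h s) then 1 else 0

/-- State occupancy measure. -/
noncomputable def occState {S A : Type*} [Fintype S] [Fintype A]
    (P : ℕ → S → A → S → ℝ) (d0 : S → ℝ) (π : ℕ → S → A → ℝ) :
    ℕ → S → ℝ
  | 0, s => d0 s
  | h + 1, s' => ∑ s, ∑ a, occ P d0 π h s a * P h s a s'

lemma occ_eq_occState {S A : Type*} [Fintype S] [Fintype A]
    (P : ℕ → S → A → S → ℝ) (d0 : S → ℝ) (π : ℕ → S → A → ℝ)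
    (h : ℕ) (s : S) (a : A) :
    occ P d0 π h s a = occState P d0 π h s * π h s a := by
  cases h <;> rfl

lemma supA_eq_argmax {A : Type*} [Fintype A] [Nonempty A] (g : A → ℝ) :
    supA g = g (argmaxA g) :=
  (Classical.choose_spec (Finset.exists_mem_eq_sup' (Finset.univ_nonempty (α := A)) g)).2

lemma greedy_sum {S A : Type*} [Fintype A] [Nonempty A]
    (f : ℕ → S → A → ℝ) (h : ℕ) (s : S) (g : A → ℝ) :
    ∑ a, greedy f h s a * g a = g (argmaxA (f h s)) := by
  simp [greedy, ite_mul]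

lemma Vval_succ {S A : Type*} [Fintype S] [Fintype A]
    (P : ℕ → S → A → S → ℝ) (r : ℕ → S → A → ℝ) (π : ℕ → S → A → ℝ)
    (H h : ℕ) (hh : h < H) (s : S) :
    Vval P r π H h s = ∑ a, π h s a *
      (r h s a + ∑ s', P h s a s' * Vval P r π H (h + 1) s') := by
  have hk : H - h = (H - (h + 1)) + 1 := by omega
  have ht : H - (H - (h + 1) + 1) = h := by omega
  unfold Vval
  rw [hk]
  simp only [Vaux, ht]

lemma Vval_top {S A : Type*} [Fintype S] [Fintype A]
    (P : ℕ → S → A → S → ℝ) (r : ℕ → S → A → ℝ) (π : ℕ → S → A → ℝ)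
    (H : ℕ) (s : S) : Vval P r π H H s = 0 := by
  simp [Vval, Vaux]

/-- **Performance difference lemma.** -/
theorem performance_difference
    {S A : Type*} [Fintype S] [Fintype A] [Nonempty S] [Nonempty A]
    (H : ℕ) (hH : 1 ≤ H)
    (P : ℕ → S → A → S → ℝ)
    (hPnn : ∀ h < H, ∀ s a s', 0 ≤ P h s a s')
    (hPsum : ∀ h < H, ∀ s a, ∑ s', P h s a s' = 1)
    (r : ℕ → S → A → ℝ)
    (d0 : S → ℝ) (hd0nn : ∀ s, 0 ≤ d0 s) (hd0sum : ∑ s, d0 s = 1)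
    (f : ℕ → S → A → ℝ) (hfH : ∀ s a, f H s a = 0) :
    ∑ s, d0 s * (supA (f 0 s) - Vval P r (greedy f) H 0 s)
      ≤ ∑ h ∈ Finset.range H,
          |∑ s, ∑ a, occ P d0 (greedy f) h s a *
            (f h s a - bellman P r h (f (h + 1)) s a)| := by
  set π := greedy f with hπ
  have key : ∀ k h, h + k = H →
      ∑ s, occState P d0 π h s * (supA (f h s) - Vval P r π H h s)
        ≤ ∑ j ∈ Finset.Ico h H,
            |∑ s, ∑ a, occ P d0 π j s a *
              (f j s a - bellman P r j (f (j + 1)) s a)| := by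
    intro k
    induction k with
    | zero =>
        intro h hh
        have hhH : h = H := by omega
        have hz : ∀ s : S, supA (f h s) = 0 := by
          intro s; rw [supA_eq_argmax, hhH]; exact hfH s _
        have hv : ∀ s : S, Vval P r π H h s = 0 := by
          intro s; rw [hhH]; exact Vval_top P r π H s
        subst hhH
        simp [hz, hv]
    | succ k ih =>
        intro h hh
        have hhH : h < H := by omega
        set g : S → ℝ := fun s' => supA (f (h + 1) s') - Vval P r π H (h + 1) s' with hg
        have A1 : ∀ s : S, occState P d0 π h s * supA (f h s)
            = ∑ a, occ P d0 π h s a * f h s a := by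
          intro s
          simp only [occ_eq_occState]
          rw [supA_eq_argmax]
          rw [← greedy_sum f h s (f h s)]
          rw [Finset.mul_sum]
          exact Finset.sum_congr rfl fun a _ => by ring
        have A2 : ∀ s : S, occState P d0 π h s * Vval P r π H h s
            = ∑ a, occ P d0 π h s a *
                (r h s a + ∑ s', P h s a s' * Vval P r π H (h + 1) s') := by
          intro s
          rw [Vval_succ P r π H h hhH, Finset.mul_sum]
          exact Finset.sum_congr rfl fun a _ => by
            rw [occ_eq_occState]; ring
        have step1 : ∑ s, occState P d0 π h s * (supA (f h s) - Vval P r π H h s)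
            = ∑ s, ∑ a, occ P d0 π h s a *
                ((f h s a - bellman P r h (f (h + 1)) s a)
                  + ∑ s', P h s a s' * g s') := by
          refine Finset.sum_congr rfl fun s _ => ?_
          rw [mul_sub, A1 s, A2 s, ← Finset.sum_sub_distrib]
          refine Finset.sum_congr rfl fun a _ => ?_
          rw [← mul_sub]
          have expand : ∑ s', P h s a s' * g s'
              = (∑ s', P h s a s' * supA (f (h + 1) s'))
                - ∑ s', P h s a s' * Vval P r π H (h + 1) s' := by
            rw [← Finset.sum_sub_distrib]
            exact Finset.sum_congr rfl fun s' _ => by rw [hg]; ring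
          congr 1
          simp only [bellman]
          rw [expand]
          ring
        have split : ∑ s, ∑ a, occ P d0 π h s a *
              ((f h s a - bellman P r h (f (h + 1)) s a) + ∑ s', P h s a s' * g s')
            = (∑ s, ∑ a, occ P d0 π h s a *
                (f h s a - bellman P r h (f (h + 1)) s a))
              + ∑ s, ∑ a, occ P d0 π h s a * ∑ s', P h s a s' * g s' := by
          rw [← Finset.sum_add_distrib]
          refine Finset.sum_congr rfl fun s _ => ?_
          rw [← Finset.sum_add_distrib]
          exact Finset.sum_congr rfl fun a _ => by ring
        have rhs : ∑ s', occState P d0 π (h + 1) s' * g s'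
            = ∑ s, ∑ a, occ P d0 π h s a * ∑ s', P h s a s' * g s' := by
          simp only [occState, Finset.sum_mul, Finset.mul_sum]
          rw [Finset.sum_comm]
          refine Finset.sum_congr rfl fun s _ => ?_
          rw [Finset.sum_comm]
          exact Finset.sum_congr rfl fun a _ => Finset.sum_congr rfl fun s' _ => by ring
        have hico : ∑ j ∈ Finset.Ico h H,
            |∑ s, ∑ a, occ P d0 π j s a *
              (f j s a - bellman P r j (f (j + 1)) s a)|
            = |∑ s, ∑ a, occ P d0 π h s a *
                (f h s a - bellman P r h (f (h + 1)) s a)|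
              + ∑ j ∈ Finset.Ico (h + 1) H,
                  |∑ s, ∑ a, occ P d0 π j s a *
                    (f j s a - bellman P r j (f (j + 1)) s a)| :=
          Finset.sum_eq_sum_Ico_succ_bot hhH _
        rw [step1, split, ← rhs, hico]
        exact add_le_add (le_abs_self _) (ih (h + 1) (by omega))
  have h0 : ∀ s : S, occState P d0 π 0 s = d0 s := fun s => rfl
  have := key H 0 (by omega)
  simp only [h0] at this
  rwa [Finset.range_eq_Ico]
end

section
/- Comparator (optimism) lemma: For any policy π^e = (π^e_0,…,π^e_{H−1}) and any tuple f = (f_0,…,f_{H−1}) of functions f_h : S×A → ℝ (with the convention f_H ≡ 0), one has Σ_s d_0(s)·(V^{π^e}_0(s) − max_a f_0(s,a)) ≤ Σ_{h=0}^{H−1} Σ_{s,a} d^{π^e}_h(s,a)·( (T_h f_{h+1})(s,a) − f_h(s,a) ). -/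
open Finset
open scoped Classical

/-- **Comparator (optimism) lemma.** -/
theorem comparator_lemma
    {S A : Type*} [Fintype S] [Fintype A] [Nonempty S] [Nonempty A]
    (H : ℕ) (hH : 1 ≤ H)
    (P : ℕ → S → A → S → ℝ)
    (hPnn : ∀ h < H, ∀ s a s', 0 ≤ P h s a s')
    (hPsum : ∀ h < H, ∀ s a, ∑ s', P h s a s' = 1)
    (r : ℕ → S → A → ℝ)
    (d0 : S → ℝ) (hd0nn : ∀ s, 0 ≤ d0 s) (hd0sum : ∑ s, d0 s = 1)
    (πe : ℕ → S → A → ℝ)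
    (hπnn : ∀ h < H, ∀ s a, 0 ≤ πe h s a)
    (hπsum : ∀ h < H, ∀ s, ∑ a, πe h s a = 1)
    (f : ℕ → S → A → ℝ) (hfH : ∀ s a, f H s a = 0) :
    ∑ s, d0 s * (Vval P r πe H 0 s - supA (f 0 s))
      ≤ ∑ h ∈ Finset.range H, ∑ s, ∑ a, occ P d0 πe h s a *
          (bellman P r h (f (h + 1)) s a - f h s a) := by

  classical
  set V : ℕ → S → ℝ := fun h s => Vval P r πe H h s with hV
  set dS : ℕ → S → ℝ := fun h s => ∑ a, occ P d0 πe h s a with hdS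
  set G : ℕ → ℝ := fun h => ∑ s, ∑ a, occ P d0 πe h s a *
      (bellman P r h (f (h + 1)) s a - f h s a) with hG
  set E : ℕ → ℝ := fun h => ∑ s, dS h s * (V h s - supA (f h s)) with hE
  have hVH : ∀ s, V H s = 0 := by
    intro s; simp [hV, Vval, Nat.sub_self, Vaux]
  have hsupfH : ∀ s, supA (f H s) = 0 := by
    intro s
    have h1 : supA (f H s) ≤ 0 :=
      Finset.sup'_le _ _ (fun a _ => le_of_eq (hfH s a))
    obtain ⟨a⟩ := (inferInstance : Nonempty A)
    have h2 : (0:ℝ) ≤ supA (f H s) := by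
      calc (0:ℝ) = f H s a := (hfH s a).symm
        _ ≤ _ := Finset.le_sup' _ (Finset.mem_univ a)
    linarith
  have hoccnn : ∀ h, h < H → ∀ s a, 0 ≤ occ P d0 πe h s a := by
    intro h
    induction h with
    | zero => intro h0 s a; exact mul_nonneg (hd0nn s) (hπnn 0 h0 s a)
    | succ n ih =>
      intro hlt s a
      have hn : n < H := Nat.lt_of_succ_lt hlt
      exact mul_nonneg
        (Finset.sum_nonneg fun s' _ => Finset.sum_nonneg fun a' _ =>
          mul_nonneg (ih hn s' a') (hPnn n hn s' a' s))
        (hπnn (n+1) hlt s a)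
  have hdSnn : ∀ h, h < H → ∀ s, 0 ≤ dS h s := fun h hlt s =>
    Finset.sum_nonneg fun a _ => hoccnn h hlt s a
  have hVrec : ∀ h, h < H → ∀ s,
      V h s = ∑ a, πe h s a * (r h s a + ∑ s', P h s a s' * V (h+1) s') := by
    intro h hlt s
    have hk : H - h = (H - (h+1)) + 1 := by omega
    have hidx : H - ((H - (h+1)) + 1) = h := by omega
    simp only [hV, Vval, hk, Vaux, hidx]
  have hocc_eq : ∀ h, h < H → ∀ s a,
      occ P d0 πe h s a = dS h s * πe h s a := by
    intro h hlt s a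
    cases h with
    | zero =>
      have hd : dS 0 s = d0 s := by
        simp only [hdS, occ, ← Finset.mul_sum, hπsum 0 hlt s, mul_one]
      simp only [occ, hd]
    | succ n =>
      have hd : dS (n+1) s = ∑ s', ∑ a', occ P d0 πe n s' a' * P n s' a' s := by
        simp only [hdS, occ, ← Finset.mul_sum, hπsum (n+1) hlt s, mul_one]
      simp only [occ, hd]
  -- key step
  have step : ∀ h, h < H → E h ≤ G h + E (h+1) := by
    intro h hlt
    have tail_eq : ∑ s, ∑ a, occ P d0 πe h s a *
        (∑ s', P h s a s' * (V (h+1) s' - supA (f (h+1) s'))) = E (h+1) := by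
      have comm : ∑ s, ∑ a, occ P d0 πe h s a *
          (∑ s', P h s a s' * (V (h+1) s' - supA (f (h+1) s')))
          = ∑ s', (∑ s, ∑ a, occ P d0 πe h s a * P h s a s') *
              (V (h+1) s' - supA (f (h+1) s')) := by
        simp_rw [Finset.mul_sum, Finset.sum_mul, mul_assoc]
        have inner : ∀ s : S, (∑ a, ∑ s', occ P d0 πe h s a *
            (P h s a s' * (V (h + 1) s' - supA (f (h + 1) s'))))
            = ∑ s', ∑ a, occ P d0 πe h s a *
            (P h s a s' * (V (h + 1) s' - supA (f (h + 1) s'))) :=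
          fun s => Finset.sum_comm
        simp_rw [inner]
        rw [Finset.sum_comm]
      rw [comm]
      rcases Nat.lt_or_ge (h+1) H with hlt1 | hge1
      · have hd : ∀ s', dS (h+1) s' = ∑ s, ∑ a, occ P d0 πe h s a * P h s a s' := by
          intro s'
          simp only [hdS, occ, ← Finset.mul_sum, hπsum (h+1) hlt1 s', mul_one]
        simp only [hE]
        refine Finset.sum_congr rfl fun s' _ => ?_
        rw [hd s']
      · have hHeq : h + 1 = H := by omega
        simp [hE, hHeq, hVH, hsupfH]
    have pointwise : ∀ s, dS h s * (V h s - supA (f h s)) ≤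
        ∑ a, occ P d0 πe h s a *
          ((bellman P r h (f (h+1)) s a - f h s a) +
            ∑ s', P h s a s' * (V (h+1) s' - supA (f (h+1) s'))) := by
      intro s
      have hfle : ∑ a, πe h s a * f h s a ≤ supA (f h s) := by
        calc ∑ a, πe h s a * f h s a
            ≤ ∑ a, πe h s a * supA (f h s) :=
              Finset.sum_le_sum fun a _ => mul_le_mul_of_nonneg_left
                (Finset.le_sup' _ (Finset.mem_univ a)) (hπnn h hlt s a)
          _ = supA (f h s) := by
              rw [← Finset.sum_mul, hπsum h hlt s, one_mul]
      have h1 : V h s - supA (f h s) ≤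
          ∑ a, πe h s a * (r h s a + (∑ s', P h s a s' * V (h+1) s') - f h s a) := by
        rw [hVrec h hlt s]
        have : ∑ a, πe h s a * (r h s a + (∑ s', P h s a s' * V (h+1) s') - f h s a)
            = (∑ a, πe h s a * (r h s a + ∑ s', P h s a s' * V (h+1) s'))
              - ∑ a, πe h s a * f h s a := by
          rw [← Finset.sum_sub_distrib]
          congr 1; ext a; ring
        rw [this]
        linarith
      have h2 : ∀ a, r h s a + (∑ s', P h s a s' * V (h+1) s') - f h s a
          = (bellman P r h (f (h+1)) s a - f h s a) +
            ∑ s', P h s a s' * (V (h+1) s' - supA (f (h+1) s')) := by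
        intro a
        simp only [bellman]
        rw [show ∑ s', P h s a s' * (V (h+1) s' - supA (f (h+1) s'))
            = (∑ s', P h s a s' * V (h+1) s')
              - ∑ s', P h s a s' * supA (f (h+1) s') by
          rw [← Finset.sum_sub_distrib]; congr 1; ext s'; ring]
        ring
      calc dS h s * (V h s - supA (f h s))
          ≤ dS h s * ∑ a, πe h s a *
              (r h s a + (∑ s', P h s a s' * V (h+1) s') - f h s a) :=
            mul_le_mul_of_nonneg_left h1 (hdSnn h hlt s)
        _ = ∑ a, occ P d0 πe h s a *
              ((bellman P r h (f (h+1)) s a - f h s a) +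
                ∑ s', P h s a s' * (V (h+1) s' - supA (f (h+1) s'))) := by
            rw [Finset.mul_sum]
            refine Finset.sum_congr rfl fun a _ => ?_
            rw [hocc_eq h hlt s a, h2 a]
            ring
    calc E h ≤ ∑ s, ∑ a, occ P d0 πe h s a *
          ((bellman P r h (f (h+1)) s a - f h s a) +
            ∑ s', P h s a s' * (V (h+1) s' - supA (f (h+1) s'))) :=
        Finset.sum_le_sum fun s _ => pointwise s
      _ = G h + E (h+1) := by
        rw [← tail_eq, hG]
        simp only [← Finset.sum_add_distrib]
        refine Finset.sum_congr rfl fun s _ => Finset.sum_congr rfl fun a _ => ?_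
        ring
  have hEH : E H = 0 := by simp [hE, hVH, hsupfH]
  have main : ∀ k, ∀ h, h + k = H → E h ≤ ∑ h' ∈ Finset.Ico h H, G h' := by
    intro k
    induction k with
    | zero =>
      intro h hh
      have : h = H := by omega
      subst this
      simp [hEH]
    | succ n ih =>
      intro h hh
      have hlt : h < H := by omega
      have h1 := step h hlt
      have h2 := ih (h+1) (by omega)
      rw [Finset.sum_eq_sum_Ico_succ_bot hlt]
      linarith
  have hmain := main H 0 (by omega)
  have hE0 : E 0 = ∑ s, d0 s * (V 0 s - supA (f 0 s)) := by
    simp only [hE]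
    refine Finset.sum_congr rfl fun s _ => ?_
    have hd : dS 0 s = d0 s := by
      simp only [hdS, occ, ← Finset.mul_sum, hπsum 0 hH s, mul_one]
    rw [hd]
  rw [hE0] at hmain
  rw [Finset.range_eq_Ico]
  exact hmain
end

section
/- Elliptical potential bound: Let x_1,…,x_T ∈ ℝ^d satisfy ‖x_t‖₂ ≤ B for all t ∈ {1,…,T}, and let λ > 0 with λ ≥ B². Define Σ_0 = λ·I_d and Σ_t = Σ_{τ=1}^t x_τ x_τᵀ + λ·I_d for t ∈ {1,…,T} (each Σ_t is positive definite, hence invertible). Then Σ_{t=1}^T sqrt( x_tᵀ Σ_{t−1}⁻¹ x_t ) ≤ sqrt( 2·d·T·log(1 + T·B²/(λ·d)) ). -/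
open Finset Matrix

/-- Regularized feature covariance matrix `Σ_t = ∑_{τ=1}^t x_τ x_τᵀ + λ I`. -/
noncomputable def covMat {d : ℕ} (x : ℕ → Fin d → ℝ) (lam : ℝ) (t : ℕ) :
    Matrix (Fin d) (Fin d) ℝ :=
  (∑ τ ∈ Finset.Icc 1 t, Matrix.vecMulVec (x τ) (x τ)) +
    lam • (1 : Matrix (Fin d) (Fin d) ℝ)

/-! The matrix determinant lemma gives `det Σ_t = det Σ_{t-1} · (1 + u_t)` with
`u_t = x_tᵀ Σ_{t-1}⁻¹ x_t`, so `∑ log (1 + u_t)` telescopes to `log (det Σ_T / det Σ_0)`.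
AM–GM on the eigenvalues bounds `det Σ_T` by `(tr Σ_T / d) ^ d ≤ (λ + T B² / d) ^ d`, whence
`∑ log (1 + u_t) ≤ d log (1 + T B² / (λ d))`. Since `Σ_{t-1} ≥ λ I` and `λ ≥ B²`, each `u_t ≤ 1`,
so `u_t ≤ 2 log (1 + u_t)`; Cauchy–Schwarz then passes from `∑ u_t` to `∑ √u_t`. -/

theorem Real.prod_le_sum_div_card_pow {ι : Type*} (s : Finset ι) (z : ι → ℝ)
    (hz : ∀ i ∈ s, 0 ≤ z i) : ∏ i ∈ s, z i ≤ ((∑ i ∈ s, z i) / #s) ^ #s := by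
  rcases s.eq_empty_or_nonempty with rfl | hs
  · simp
  have hcard : (0 : ℝ) < #s := by exact_mod_cast hs.card_pos
  have amgm := Real.geom_mean_le_arith_mean s (fun _ => 1) z (fun _ _ => zero_le_one)
    (by simpa using hcard) hz
  simp only [Real.rpow_one, sum_const, nsmul_eq_mul, mul_one, one_mul] at amgm
  have hprod : 0 ≤ ∏ i ∈ s, z i := prod_nonneg hz
  calc ∏ i ∈ s, z i = ((∏ i ∈ s, z i) ^ ((#s : ℝ)⁻¹)) ^ #s := by
        rw [← Real.rpow_natCast, ← Real.rpow_mul hprod, inv_mul_cancel₀ hcard.ne', Real.rpow_one]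
    _ ≤ ((∑ i ∈ s, z i) / #s) ^ #s := by gcongr

namespace Matrix

variable {n : Type*} [Fintype n] [DecidableEq n]

theorem det_add_vecMulVec {R : Type*} [CommRing R] {A : Matrix n n R} (hA : IsUnit A.det)
    (u v : n → R) : (A + vecMulVec u v).det = A.det * (1 + v ⬝ᵥ A⁻¹ *ᵥ u) := by
  rw [vecMulVec_eq Unit, det_add_replicateCol_mul_replicateRow hA]
  congr 1
  rw [det_unique, add_apply, one_apply_eq, Matrix.mul_assoc, ← replicateCol_mulVec,
    replicateRow_mul_replicateCol_apply]

theorem PosSemidef.det_le_trace_div_card_pow {A : Matrix n n ℝ} (hA : A.PosSemidef) :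
    A.det ≤ (A.trace / Fintype.card n) ^ Fintype.card n := by
  rw [hA.1.det_eq_prod_eigenvalues, hA.1.trace_eq_sum_eigenvalues]
  simpa using Real.prod_le_sum_div_card_pow univ _ fun i _ => hA.eigenvalues_nonneg i

theorem dotProduct_inv_mulVec_le {A : Matrix n n ℝ} (hA : IsUnit A.det) {c : ℝ} (hc : 0 < c)
    (hlow : ∀ y, c * (y ⬝ᵥ y) ≤ y ⬝ᵥ A *ᵥ y) (v : n → ℝ) :
    v ⬝ᵥ A⁻¹ *ᵥ v ≤ (v ⬝ᵥ v) / c := by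
  set y := A⁻¹ *ᵥ v
  have hAy : A *ᵥ y = v := by rw [mulVec_mulVec, mul_nonsing_inv _ hA, one_mulVec]
  have hcoercive : c * (y ⬝ᵥ y) ≤ y ⬝ᵥ v := hAy ▸ hlow y
  have hcs : (y ⬝ᵥ v) ^ 2 ≤ (y ⬝ᵥ y) * (v ⬝ᵥ v) := by
    simpa [dotProduct, sq] using sum_mul_sq_le_sq_mul_sq univ y v
  have hvv : 0 ≤ v ⬝ᵥ v := by simpa using dotProduct_star_self_nonneg v
  rw [dotProduct_comm, le_div_iff₀ hc]
  rcases le_or_gt (y ⬝ᵥ v) 0 with hneg | hpos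
  · nlinarith
  · nlinarith [mul_le_mul_of_nonneg_right hcoercive hvv]

end Matrix

theorem Real.le_two_mul_log_one_add {u : ℝ} (h0 : 0 ≤ u) (h1 : u ≤ 1) :
    u ≤ 2 * Real.log (1 + u) := by
  have hlog := Real.one_sub_inv_le_log_of_pos (by linarith : 0 < 1 + u)
  have hrewrite : 1 - (1 + u)⁻¹ = u / (1 + u) := by field_simp; ring
  have hhalf : u / 2 ≤ u / (1 + u) := div_le_div_of_nonneg_left h0 (by linarith) (by linarith)
  linarith

section covMat

variable {d : ℕ} (x : ℕ → Fin d → ℝ) {lam : ℝ}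

theorem covMat_zero : covMat x lam 0 = lam • 1 := by
  simp [covMat]

theorem covMat_succ (t : ℕ) :
    covMat x lam (t + 1) = covMat x lam t + vecMulVec (x (t + 1)) (x (t + 1)) := by
  rw [covMat, covMat, sum_Icc_succ_top (by omega), add_right_comm]

theorem posSemidef_sum_vecMulVec_self (s : Finset ℕ) :
    (∑ τ ∈ s, vecMulVec (x τ) (x τ)).PosSemidef :=
  posSemidef_sum s fun τ _ => by simpa using posSemidef_vecMulVec_self_star (x τ)

theorem smul_dotProduct_self_le_covMat (t : ℕ) (y : Fin d → ℝ) :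
    lam * (y ⬝ᵥ y) ≤ y ⬝ᵥ covMat x lam t *ᵥ y := by
  have := (posSemidef_sum_vecMulVec_self x (Icc 1 t)).dotProduct_mulVec_nonneg y
  simp only [star_trivial] at this
  simp only [covMat, add_mulVec, dotProduct_add, smul_mulVec, one_mulVec, dotProduct_smul,
    smul_eq_mul]
  linarith

theorem covMat_posDef (hlam : 0 < lam) (t : ℕ) : (covMat x lam t).PosDef :=
  PosDef.posSemidef_add (posSemidef_sum_vecMulVec_self x _) (PosDef.one.smul hlam)

theorem dotProduct_inv_covMat_mulVec_nonneg (hlam : 0 < lam) (t : ℕ) (v : Fin d → ℝ) :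
    0 ≤ v ⬝ᵥ (covMat x lam t)⁻¹ *ᵥ v := by
  simpa using (covMat_posDef x hlam t).inv.posSemidef.dotProduct_mulVec_nonneg v

theorem dotProduct_inv_covMat_mulVec_le (hlam : 0 < lam) (t : ℕ) (v : Fin d → ℝ) :
    v ⬝ᵥ (covMat x lam t)⁻¹ *ᵥ v ≤ (v ⬝ᵥ v) / lam :=
  dotProduct_inv_mulVec_le (covMat_posDef x hlam t).det_pos.ne'.isUnit hlam
    (smul_dotProduct_self_le_covMat x t) v

theorem det_covMat_succ (hlam : 0 < lam) (t : ℕ) :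
    (covMat x lam (t + 1)).det =
      (covMat x lam t).det * (1 + x (t + 1) ⬝ᵥ (covMat x lam t)⁻¹ *ᵥ x (t + 1)) := by
  rw [covMat_succ, det_add_vecMulVec (covMat_posDef x hlam t).det_pos.ne'.isUnit]

theorem sum_log_one_add_dotProduct_inv_covMat_mulVec (hlam : 0 < lam) (T : ℕ) :
    ∑ t ∈ Icc 1 T, Real.log (1 + x t ⬝ᵥ (covMat x lam (t - 1))⁻¹ *ᵥ x t) =
      Real.log (covMat x lam T).det - Real.log (covMat x lam 0).det := by
  induction T with
  | zero => simp
  | succ T ih =>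
    have hdet := (covMat_posDef x hlam T).det_pos
    have hquad := dotProduct_inv_covMat_mulVec_nonneg x hlam T (x (T + 1))
    rw [sum_Icc_succ_top (by omega), ih, Nat.add_sub_cancel, det_covMat_succ x hlam,
      Real.log_mul hdet.ne' (by positivity)]
    ring

theorem trace_covMat (T : ℕ) :
    (covMat x lam T).trace = ∑ τ ∈ Icc 1 T, x τ ⬝ᵥ x τ + lam * d := by
  simp [covMat, trace_add, trace_sum, trace_smul, trace_vecMulVec]

theorem det_covMat_le (hd : 1 ≤ d) (hlam : 0 < lam) {T : ℕ} {B : ℝ}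
    (hx : ∀ t ∈ Icc 1 T, x t ⬝ᵥ x t ≤ B ^ 2) :
    (covMat x lam T).det ≤ (lam * (1 + T * B ^ 2 / (lam * d))) ^ d := by
  have hd' : (0 : ℝ) < d := by exact_mod_cast hd
  have htrace : (covMat x lam T).trace ≤ T * B ^ 2 + lam * d := by
    rw [trace_covMat]
    have := sum_le_sum hx
    simp only [sum_const, Nat.card_Icc, Nat.add_sub_cancel, nsmul_eq_mul] at this
    linarith
  calc (covMat x lam T).det ≤ ((covMat x lam T).trace / d) ^ d := by
        simpa using (covMat_posDef x hlam T).posSemidef.det_le_trace_div_card_pow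
    _ ≤ ((T * B ^ 2 + lam * d) / d) ^ d := by
        gcongr
        exact div_nonneg (covMat_posDef x hlam T).posSemidef.trace_nonneg d.cast_nonneg
    _ = (lam * (1 + T * B ^ 2 / (lam * d))) ^ d := by
        field_simp
        ring

theorem log_det_covMat_sub_le (hd : 1 ≤ d) (hlam : 0 < lam) {T : ℕ} {B : ℝ}
    (hx : ∀ t ∈ Icc 1 T, x t ⬝ᵥ x t ≤ B ^ 2) :
    Real.log (covMat x lam T).det - Real.log (covMat x lam 0).det ≤
      d * Real.log (1 + T * B ^ 2 / (lam * d)) := by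
  have hdet0 : (covMat x lam 0).det = lam ^ d := by simp [covMat_zero]
  have hgrowth : 0 < 1 + T * B ^ 2 / (lam * d) := by positivity
  have := Real.log_le_log (covMat_posDef x hlam T).det_pos (det_covMat_le x hd hlam hx)
  rw [Real.log_pow, Real.log_mul hlam.ne' hgrowth.ne'] at this
  rw [hdet0, Real.log_pow]
  linarith

theorem sum_dotProduct_inv_covMat_mulVec_le (hd : 1 ≤ d) (hlam : 0 < lam) {T : ℕ} {B : ℝ}
    (hlamB : B ^ 2 ≤ lam) (hx : ∀ t ∈ Icc 1 T, x t ⬝ᵥ x t ≤ B ^ 2) :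
    ∑ t ∈ Icc 1 T, x t ⬝ᵥ (covMat x lam (t - 1))⁻¹ *ᵥ x t ≤
      2 * d * Real.log (1 + T * B ^ 2 / (lam * d)) := by
  have hterm : ∀ t ∈ Icc 1 T, x t ⬝ᵥ (covMat x lam (t - 1))⁻¹ *ᵥ x t ≤
      2 * Real.log (1 + x t ⬝ᵥ (covMat x lam (t - 1))⁻¹ *ᵥ x t) := fun t ht =>
    Real.le_two_mul_log_one_add (dotProduct_inv_covMat_mulVec_nonneg x hlam _ _)
      ((dotProduct_inv_covMat_mulVec_le x hlam _ _).trans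
        ((div_le_one hlam).2 ((hx t ht).trans hlamB)))
  calc ∑ t ∈ Icc 1 T, x t ⬝ᵥ (covMat x lam (t - 1))⁻¹ *ᵥ x t
      ≤ ∑ t ∈ Icc 1 T, 2 * Real.log (1 + x t ⬝ᵥ (covMat x lam (t - 1))⁻¹ *ᵥ x t) :=
        sum_le_sum hterm
    _ = 2 * (Real.log (covMat x lam T).det - Real.log (covMat x lam 0).det) := by
        rw [← mul_sum, sum_log_one_add_dotProduct_inv_covMat_mulVec x hlam]
    _ ≤ 2 * (d * Real.log (1 + T * B ^ 2 / (lam * d))) := by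
        gcongr
        exact log_det_covMat_sub_le x hd hlam hx
    _ = 2 * d * Real.log (1 + T * B ^ 2 / (lam * d)) := by ring

end covMat

theorem elliptical_potential_general
    (d T : ℕ) (hd : 1 ≤ d)
    (x : ℕ → Fin d → ℝ) (B : ℝ)
    (hB : ∀ t ∈ Finset.Icc 1 T, Real.sqrt (∑ i, x t i ^ 2) ≤ B)
    (lam : ℝ) (hlam : 0 < lam) (hlamB : B ^ 2 ≤ lam) :
    ∑ t ∈ Finset.Icc 1 T,
        Real.sqrt (x t ⬝ᵥ (covMat x lam (t - 1))⁻¹ *ᵥ x t)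
      ≤ Real.sqrt (2 * d * T * Real.log (1 + T * B ^ 2 / (lam * d))) := by
  have hx : ∀ t ∈ Icc 1 T, x t ⬝ᵥ x t ≤ B ^ 2 := fun t ht => by
    simpa [dotProduct, sq] using (Real.sqrt_le_iff.mp (hB t ht)).2
  refine Real.le_sqrt_of_sq_le ?_
  calc (∑ t ∈ Icc 1 T, Real.sqrt (x t ⬝ᵥ (covMat x lam (t - 1))⁻¹ *ᵥ x t)) ^ 2
      ≤ #(Icc 1 T) * ∑ t ∈ Icc 1 T, Real.sqrt (x t ⬝ᵥ (covMat x lam (t - 1))⁻¹ *ᵥ x t) ^ 2 :=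
        sq_sum_le_card_mul_sum_sq
    _ = T * ∑ t ∈ Icc 1 T, x t ⬝ᵥ (covMat x lam (t - 1))⁻¹ *ᵥ x t := by
        simp [Real.sq_sqrt (dotProduct_inv_covMat_mulVec_nonneg x hlam _ _)]
    _ ≤ T * (2 * d * Real.log (1 + T * B ^ 2 / (lam * d))) := by
        gcongr
        exact sum_dotProduct_inv_covMat_mulVec_le x hd hlam hlamB hx
    _ = 2 * d * T * Real.log (1 + T * B ^ 2 / (lam * d)) := by ring

/-- **Elliptical potential bound.** -/
theorem elliptical_potential
    (d T : ℕ) (hd : 1 ≤ d) (hT : 1 ≤ T)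
    (x : ℕ → Fin d → ℝ) (B : ℝ)
    (hB : ∀ t ∈ Finset.Icc 1 T, Real.sqrt (∑ i, x t i ^ 2) ≤ B)
    (lam : ℝ) (hlam : 0 < lam) (hlamB : B ^ 2 ≤ lam) :
    ∑ t ∈ Finset.Icc 1 T,
        Real.sqrt (x t ⬝ᵥ (covMat x lam (t - 1))⁻¹ *ᵥ x t)
      ≤ Real.sqrt (2 * d * T * Real.log (1 + T * B ^ 2 / (lam * d))) :=
  elliptical_potential_general d T hd x B hB lam hlam hlamB
end

section
/- Online distribution-shift bound (Q-type): Let f^1,…,f^T ∈ F, let λ > 0, and for each h define Σ_{t;h} = Σ_{τ=1}^t X_h(f^τ)·X_h(f^τ)ᵀ + λ·I_d (so Σ_{0;h} = λ·I_d). Then for every t ∈ {1,…,T} and every h ∈ {0,…,H−1}: |⟨W_h(f^t), X_h(f^t)⟩| ≤ sqrt( X_h(f^t)ᵀ Σ_{t−1;h}⁻¹ X_h(f^t) ) · sqrt( Σ_{i=1}^{t−1} Σ_{s,a} d^{π^{f^i}}_h(s,a)·( f^t_h(s,a) − (T_h f^t_{h+1})(s,a) )² + λ·B_W² ). -/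
open Finset Matrix
open scoped Classical

/-!
Write `x = X_h(f^t)`, `w = W_h(f^t)` and `Σ = Σ_{t-1;h}`. Cauchy–Schwarz in the inner product
defined by the positive definite matrix `Σ` gives `|⟨w, x⟩| ≤ ‖x‖_{Σ⁻¹} ‖w‖_Σ`, and
`‖w‖_Σ² = Σ_τ ⟨X_h(f^τ), w⟩² + λ‖w‖²`. By the bilinear structure each `⟨X_h(f^τ), w⟩` is, up to
sign, the expected Bellman residual of `f^t` under the occupancy measure of `π^{f^τ}`, whose
square is at most the expected squared residual by Jensen's inequality; and `‖w‖² ≤ B_W²`.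
-/

namespace Matrix

variable {n ι : Type*} [Fintype n] [DecidableEq n]

theorem PosDef.abs_dotProduct_le_sqrt_mul_sqrt {M : Matrix n n ℝ} (hM : M.PosDef)
    (w x : n → ℝ) :
    |w ⬝ᵥ x| ≤ √(x ⬝ᵥ M⁻¹ *ᵥ x) * √(w ⬝ᵥ M *ᵥ w) := by
  set y := M⁻¹ *ᵥ x
  have hMy : M *ᵥ y = x := by
    rw [mulVec_mulVec, mul_nonsing_inv M ((isUnit_iff_isUnit_det M).mp hM.isUnit), one_mulVec]
  have hnonneg : ∀ v, 0 ≤ toBilin' M v v := fun v => by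
    simpa [toBilin'_apply'] using hM.posSemidef.dotProduct_mulVec_nonneg v
  have hcs := LinearMap.BilinForm.apply_sq_le_of_symm _ hnonneg
    (LinearMap.BilinForm.isSymm_iff.mp (isSymm_toBilin'_iff_isSymm.mpr hM.isHermitian)) w y
  simp only [toBilin'_apply', hMy, dotProduct_comm y x] at hcs
  have hxy : 0 ≤ x ⬝ᵥ y := by simpa using hM.inv.posSemidef.dotProduct_mulVec_nonneg x
  rw [← Real.sqrt_sq_eq_abs, ← Real.sqrt_mul hxy, mul_comm]
  exact Real.sqrt_le_sqrt hcs

theorem dotProduct_sum_vecMulVec_add_smul_one_mulVec {R : Type*} [CommRing R] (s : Finset ι)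
    (u : ι → n → R) (c : R) (v : n → R) :
    v ⬝ᵥ (∑ τ ∈ s, vecMulVec (u τ) (u τ) + c • 1) *ᵥ v
      = ∑ τ ∈ s, (u τ ⬝ᵥ v) ^ 2 + c * (v ⬝ᵥ v) := by
  simp [add_mulVec, sum_mulVec, vecMulVec_mulVec, smul_mulVec, dotProduct_comm v, sum_dotProduct,
    sq]

theorem posDef_sum_vecMulVec_add_smul_one (s : Finset ι) (u : ι → n → ℝ) {c : ℝ} (hc : 0 < c) :
    (∑ τ ∈ s, vecMulVec (u τ) (u τ) + c • 1).PosDef :=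
  PosDef.posSemidef_add
    (posSemidef_sum s fun τ _ => by simpa using posSemidef_vecMulVec_star_self (u τ))
    (PosDef.one.smul hc)

end Matrix

theorem sq_sum_sum_mul_le_sum_sum_mul_sq {S A : Type*} [Fintype S] [Fintype A]
    {p : S → A → ℝ} (hp : ∀ s a, 0 ≤ p s a) (hp_sum : ∑ s, ∑ a, p s a = 1) (g : S → A → ℝ) :
    (∑ s, ∑ a, p s a * g s a) ^ 2 ≤ ∑ s, ∑ a, p s a * g s a ^ 2 := by
  simp only [← Fintype.sum_prod_type'] at hp_sum ⊢
  calc (∑ x : S × A, p x.1 x.2 * g x.1 x.2) ^ 2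
      ≤ (∑ x : S × A, p x.1 x.2) * ∑ x : S × A, p x.1 x.2 * g x.1 x.2 ^ 2 :=
        Finset.sum_sq_le_sum_mul_sum_of_sq_le_mul _ (fun x _ => hp x.1 x.2)
          (fun x _ => mul_nonneg (hp x.1 x.2) (sq_nonneg _)) fun x _ => (by ring : _ = _).le
    _ = ∑ x : S × A, p x.1 x.2 * g x.1 x.2 ^ 2 := by rw [hp_sum, one_mul]

theorem greedy_nonneg {S A : Type*} [Fintype A] [Nonempty A] (f : ℕ → S → A → ℝ) (h : ℕ)
    (s : S) (a : A) : 0 ≤ greedy f h s a := by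
  unfold greedy
  split_ifs <;> norm_num

theorem sum_greedy {S A : Type*} [Fintype A] [Nonempty A] (f : ℕ → S → A → ℝ) (h : ℕ) (s : S) :
    ∑ a, greedy f h s a = 1 := by
  simp [greedy]

section Occupancy

variable {S A : Type*} [Fintype S] [Fintype A]
  {P : ℕ → S → A → S → ℝ} {d0 : S → ℝ} {π : ℕ → S → A → ℝ}

theorem occ_nonneg {h : ℕ} (hP : ∀ k < h, ∀ s a s', 0 ≤ P k s a s') (hd0 : ∀ s, 0 ≤ d0 s)
    (hπ : ∀ k s a, 0 ≤ π k s a) (s : S) (a : A) : 0 ≤ occ P d0 π h s a := by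
  induction h generalizing s a with
  | zero => exact mul_nonneg (hd0 s) (hπ 0 s a)
  | succ h ih =>
    have ih' := ih fun k hk => hP k (Nat.lt_succ_of_lt hk)
    exact mul_nonneg (sum_nonneg fun s' _ => sum_nonneg fun a' _ =>
      mul_nonneg (ih' s' a') (hP h h.lt_succ_self s' a' s)) (hπ _ s a)

theorem sum_occ {h : ℕ} (hP : ∀ k < h, ∀ s a, ∑ s', P k s a s' = 1) (hd0 : ∑ s, d0 s = 1)
    (hπ : ∀ k s, ∑ a, π k s a = 1) : ∑ s, ∑ a, occ P d0 π h s a = 1 := by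
  induction h with
  | zero => simp [occ, ← mul_sum, hπ, hd0]
  | succ h ih =>
    calc ∑ s', ∑ a', occ P d0 π (h + 1) s' a'
        = ∑ s', ∑ s, ∑ a, occ P d0 π h s a * P h s a s' := by simp [occ, ← mul_sum, hπ]
      _ = ∑ s, ∑ a, occ P d0 π h s a * ∑ s', P h s a s' := by
        rw [sum_comm]; simp only [mul_sum]; exact sum_congr rfl fun s _ => sum_comm
      _ = 1 := by
        simp only [hP h h.lt_succ_self, mul_one]
        exact ih fun k hk => hP k (Nat.lt_succ_of_lt hk)

end Occupancy

theorem online_distribution_shift_Qtype_general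
    {S A : Type*} [Fintype S] [Fintype A] [Nonempty A]
    (H : ℕ)
    (P : ℕ → S → A → S → ℝ)
    (hPnn : ∀ h < H, ∀ s a s', 0 ≤ P h s a s')
    (hPsum : ∀ h < H, ∀ s a, ∑ s', P h s a s' = 1)
    (r : ℕ → S → A → ℝ)
    (d0 : S → ℝ) (hd0nn : ∀ s, 0 ≤ d0 s) (hd0sum : ∑ s, d0 s = 1)
    (dd : ℕ) (BW : ℝ)
    (F : Set (ℕ → S → A → ℝ))
    (X W : ℕ → (ℕ → S → A → ℝ) → Fin dd → ℝ)
    (hW : ∀ f ∈ F, ∀ h < H, Real.sqrt (∑ i, W h f i ^ 2) ≤ BW)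
    (hbil : ∀ f ∈ F, ∀ g ∈ F, ∀ h < H,
      |∑ s, ∑ a, occ P d0 (greedy f) h s a *
          (g h s a - bellman P r h (g (h + 1)) s a)|
        = |X h f ⬝ᵥ W h g|)
    (T : ℕ) (fseq : ℕ → (ℕ → S → A → ℝ))
    (hfseq : ∀ t ∈ Finset.Icc 1 T, fseq t ∈ F)
    (lam : ℝ) (hlam : 0 < lam) :
    ∀ t ∈ Finset.Icc 1 T, ∀ h < H,
      |W h (fseq t) ⬝ᵥ X h (fseq t)| ≤
        Real.sqrt (X h (fseq t) ⬝ᵥ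
            ((∑ τ ∈ Finset.Icc 1 (t - 1),
                Matrix.vecMulVec (X h (fseq τ)) (X h (fseq τ))) +
              lam • (1 : Matrix (Fin dd) (Fin dd) ℝ))⁻¹ *ᵥ X h (fseq t)) *
          Real.sqrt ((∑ i ∈ Finset.Icc 1 (t - 1), ∑ s, ∑ a,
              occ P d0 (greedy (fseq i)) h s a *
                (fseq t h s a - bellman P r h (fseq t (h + 1)) s a) ^ 2) +
            lam * BW ^ 2) := by
  intro t ht h hh
  set g := fseq t
  have hgF : g ∈ F := hfseq t ht
  have hresidual : ∀ τ ∈ Icc 1 (t - 1), (X h (fseq τ) ⬝ᵥ W h g) ^ 2 ≤ ∑ s, ∑ a,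
      occ P d0 (greedy (fseq τ)) h s a * (g h s a - bellman P r h (g (h + 1)) s a) ^ 2 := by
    intro τ hτ
    have hτF : fseq τ ∈ F :=
      hfseq τ (Icc_subset_Icc le_rfl (by have := (mem_Icc.mp ht).2; omega) hτ)
    rw [← sq_abs, ← hbil _ hτF _ hgF h hh, sq_abs]
    exact sq_sum_sum_mul_le_sum_sum_mul_sq
      (occ_nonneg (fun k hk => hPnn k (hk.trans hh)) hd0nn (greedy_nonneg _))
      (sum_occ (fun k hk => hPsum k (hk.trans hh)) hd0sum (sum_greedy _)) _
  have hWnorm : W h g ⬝ᵥ W h g ≤ BW ^ 2 := by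
    simpa [dotProduct, sq] using (Real.sqrt_le_iff.mp (hW g hgF h hh)).2
  calc |W h g ⬝ᵥ X h g|
      ≤ √(X h g ⬝ᵥ _ *ᵥ X h g) * √(W h g ⬝ᵥ _ *ᵥ W h g) :=
        (posDef_sum_vecMulVec_add_smul_one _ _ hlam).abs_dotProduct_le_sqrt_mul_sqrt _ _
    _ ≤ _ := by
      rw [dotProduct_sum_vecMulVec_add_smul_one_mulVec]
      gcongr with τ hτ
      exact hresidual τ hτ

/-- **Online distribution-shift bound (Q-type bilinear model).** -/
theorem online_distribution_shift_Qtype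
    {S A : Type*} [Fintype S] [Fintype A] [Nonempty S] [Nonempty A]
    (H : ℕ) (hH : 1 ≤ H)
    (P : ℕ → S → A → S → ℝ)
    (hPnn : ∀ h < H, ∀ s a s', 0 ≤ P h s a s')
    (hPsum : ∀ h < H, ∀ s a, ∑ s', P h s a s' = 1)
    (r : ℕ → S → A → ℝ)
    (d0 : S → ℝ) (hd0nn : ∀ s, 0 ≤ d0 s) (hd0sum : ∑ s, d0 s = 1)
    (dd : ℕ) (Vmax BX BW : ℝ)
    (F : Set (ℕ → S → A → ℝ))
    (hFbdd : ∀ f ∈ F, ∀ h < H, ∀ s a, 0 ≤ f h s a ∧ f h s a ≤ Vmax)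
    (hFH : ∀ f ∈ F, ∀ s a, f H s a = 0)
    (X W : ℕ → (ℕ → S → A → ℝ) → Fin dd → ℝ)
    (hX : ∀ f ∈ F, ∀ h < H, Real.sqrt (∑ i, X h f i ^ 2) ≤ BX)
    (hW : ∀ f ∈ F, ∀ h < H, Real.sqrt (∑ i, W h f i ^ 2) ≤ BW)
    (hbil : ∀ f ∈ F, ∀ g ∈ F, ∀ h < H,
      |∑ s, ∑ a, occ P d0 (greedy f) h s a *
          (g h s a - bellman P r h (g (h + 1)) s a)|
        = |X h f ⬝ᵥ W h g|)
    (T : ℕ) (fseq : ℕ → (ℕ → S → A → ℝ))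
    (hfseq : ∀ t ∈ Finset.Icc 1 T, fseq t ∈ F)
    (lam : ℝ) (hlam : 0 < lam) :
    ∀ t ∈ Finset.Icc 1 T, ∀ h < H,
      |W h (fseq t) ⬝ᵥ X h (fseq t)| ≤
        Real.sqrt (X h (fseq t) ⬝ᵥ
            ((∑ τ ∈ Finset.Icc 1 (t - 1),
                Matrix.vecMulVec (X h (fseq τ)) (X h (fseq τ))) +
              lam • (1 : Matrix (Fin dd) (Fin dd) ℝ))⁻¹ *ᵥ X h (fseq t)) *
          Real.sqrt ((∑ i ∈ Finset.Icc 1 (t - 1), ∑ s, ∑ a,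
              occ P d0 (greedy (fseq i)) h s a *
                (fseq t h s a - bellman P r h (fseq t (h + 1)) s a) ^ 2) +
            lam * BW ^ 2) :=
  online_distribution_shift_Qtype_general H P hPnn hPsum r d0 hd0nn hd0sum dd BW F X W hW hbil T
    fseq hfseq lam hlam
end

section
/- Freedman-type inequality: Let (Ω, 𝒜, μ) be a probability space with a filtration 𝒜_0 ⊆ 𝒜_1 ⊆ … ⊆ 𝒜_T ⊆ 𝒜, and let X_1,…,X_T be real random variables with X_t measurable with respect to 𝒜_t and |X_t| ≤ R almost surely, where R > 0. Then for every δ ∈ (0,1) and every λ ∈ (0, 1/(2R)], with probability at least 1 − δ: |Σ_{t=1}^T ( X_t − E[X_t | 𝒜_{t−1}] )| ≤ λ·Σ_{t=1}^T ( 2R·|E[X_t | 𝒜_{t−1}]| + E[X_t² | 𝒜_{t−1}] ) + log(2/δ)/λ. -/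
/-!
Write `Y_t = E[X_t | 𝒜_{t-1}]` and `W_t = E[X_t² | 𝒜_{t-1}]`. For `|c|·2R ≤ 1` the elementary bound
`exp x ≤ 1 + x + x²` (valid for `x ≤ 1`), together with `E[(X_t - Y_t)² | 𝒜_{t-1}] ≤ W_t`, gives
`E[exp (c (X_t - Y_t) - c² W_t) | 𝒜_{t-1}] ≤ 1`. Hence the product of these factors over `t ≤ T`,
which is `exp (c S - c² V)` with `S = ∑ (X_t - Y_t)` and `V = ∑ W_t`, has expectation at most `1`.
Chernoff's bound for `c = λ` and `c = -λ` makes each of `± λ S - λ² V ≥ log (2/δ)` an event of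
probability at most `δ/2`, and outside both of them `|S| ≤ λ V + log (2/δ) / λ`.
-/

open Finset MeasureTheory

namespace Real

lemma exp_le_one_add_add_sq {x : ℝ} (hx : x ≤ 1) : exp x ≤ 1 + x + x ^ 2 := by
  rcases le_or_gt x (-1) with h | h
  · nlinarith [exp_le_one_iff.2 (h.trans (by norm_num) : x ≤ 0)]
  · have hx' : |x| ≤ 1 := abs_le.2 ⟨h.le, hx⟩
    have hb := abs_le.1 (exp_bound hx' (n := 3) (by norm_num))
    norm_num [sum_range_succ, Nat.factorial] at hb
    have : |x| ^ 3 ≤ x ^ 2 := by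
      rw [← sq_abs x, pow_succ]; exact mul_le_of_le_one_right (by positivity) hx'
    nlinarith

end Real

open Real ProbabilityTheory

section ConditionalBernstein

variable {Ω : Type*} {m m0 : MeasurableSpace Ω} {μ : Measure Ω} {X : Ω → ℝ} {R c : ℝ}

lemma ae_abs_sub_condExp_le (hXR : ∀ᵐ ω ∂μ, |X ω| ≤ R) :
    ∀ᵐ ω ∂μ, |X ω - μ[X|m] ω| ≤ 2 * R := by
  filter_upwards [hXR, ae_bdd_abs_condExp_of_ae_bdd_abs (m := m) hXR] with ω h₁ h₂
  exact (abs_sub _ _).trans (by linarith)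

lemma ae_mul_sub_condExp_le_one (hXR : ∀ᵐ ω ∂μ, |X ω| ≤ R) (hc : |c| * (2 * R) ≤ 1) :
    ∀ᵐ ω ∂μ, c * (X ω - μ[X|m] ω) ≤ 1 := by
  filter_upwards [ae_abs_sub_condExp_le hXR] with ω h
  calc c * (X ω - μ[X|m] ω) ≤ |c| * |X ω - μ[X|m] ω| := by rw [← abs_mul]; exact le_abs_self _
    _ ≤ |c| * (2 * R) := by gcongr
    _ ≤ 1 := hc

lemma integrable_exp_mul_sub_condExp [IsFiniteMeasure μ] (hm : m ≤ m0)
    (hX : AEStronglyMeasurable X μ) (hXR : ∀ᵐ ω ∂μ, |X ω| ≤ R) (hc : |c| * (2 * R) ≤ 1) :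
    Integrable (fun ω => exp (c * (X ω - μ[X|m] ω))) μ := by
  refine .of_bound ?_ (exp 1) ?_
  · exact continuous_exp.comp_aestronglyMeasurable
      ((hX.sub (stronglyMeasurable_condExp.mono hm).aestronglyMeasurable).const_mul c)
  · filter_upwards [ae_mul_sub_condExp_le_one hXR hc] with ω h
    rw [norm_of_nonneg (exp_pos _).le]
    exact exp_le_exp.2 h

lemma condExp_exp_mul_sub_condExp_le [IsFiniteMeasure μ] (hm : m ≤ m0)
    (hX : AEStronglyMeasurable X μ) (hXR : ∀ᵐ ω ∂μ, |X ω| ≤ R) (hc : |c| * (2 * R) ≤ 1) :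
    μ[fun ω => exp (c * (X ω - μ[X|m] ω)) | m] ≤ᵐ[μ] fun ω => exp (c ^ 2 * μ[X ^ 2|m] ω) := by
  have hcent_meas : AEStronglyMeasurable (X - μ[X|m]) μ :=
    hX.sub (stronglyMeasurable_condExp.mono hm).aestronglyMeasurable
  have hcent_bdd := ae_abs_sub_condExp_le (m := m) hXR
  have hcent_int : Integrable (X - μ[X|m]) μ := .of_bound hcent_meas (2 * R) hcent_bdd
  have hcent_sq_int : Integrable ((X - μ[X|m]) ^ 2) μ :=
    (MemLp.of_bound hcent_meas (2 * R) hcent_bdd).integrable_sq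
  have h_taylor : (fun ω => exp (c * (X ω - μ[X|m] ω)))
      ≤ᵐ[μ] (fun _ => 1) + c • (X - μ[X|m]) + c ^ 2 • (X - μ[X|m]) ^ 2 := by
    filter_upwards [ae_mul_sub_condExp_le_one (m := m) hXR hc] with ω h
    simpa only [Pi.add_apply, Pi.smul_apply, Pi.sub_apply, Pi.pow_apply, smul_eq_mul, mul_pow]
      using exp_le_one_add_add_sq h
  have h_mean : μ[X - μ[X|m] | m] =ᵐ[μ] 0 := by
    filter_upwards [condExp_sub (m := m) (Integrable.of_bound hX R hXR) integrable_condExp]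
      with ω h
    rw [h, condExp_of_stronglyMeasurable hm stronglyMeasurable_condExp integrable_condExp]
    exact sub_self _
  have h_var : μ[(X - μ[X|m]) ^ 2 | m] ≤ᵐ[μ] μ[X ^ 2|m] :=
    condVar_ae_le_condExp_sq hm (MemLp.of_bound hX R hXR)
  have h_poly_int : Integrable ((fun _ => 1) + c • (X - μ[X|m]) + c ^ 2 • (X - μ[X|m]) ^ 2) μ :=
    ((integrable_const 1).add (hcent_int.smul c)).add (hcent_sq_int.smul (c ^ 2))
  have h_lin : μ[(fun _ => 1) + c • (X - μ[X|m]) + c ^ 2 • (X - μ[X|m]) ^ 2 | m]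
      =ᵐ[μ] (fun _ => 1) + c • μ[X - μ[X|m] | m] + c ^ 2 • μ[(X - μ[X|m]) ^ 2 | m] := by
    filter_upwards [condExp_add ((integrable_const 1).add (hcent_int.smul c))
        (hcent_sq_int.smul (c ^ 2)) m,
      condExp_add (integrable_const 1) (hcent_int.smul c) m, condExp_smul c (X - μ[X|m]) m,
      condExp_smul (c ^ 2) ((X - μ[X|m]) ^ 2) m] with ω h₁ h₂ h₃ h₄
    simp only [Pi.add_apply, Pi.smul_apply, condExp_const hm] at h₁ h₂ h₃ h₄ ⊢
    rw [h₁, h₂, h₃, h₄]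
  filter_upwards [condExp_mono (m := m) (integrable_exp_mul_sub_condExp hm hX hXR hc) h_poly_int
      h_taylor, h_lin, h_mean, h_var] with ω h h₁ h₂ h₃
  rw [h₁] at h
  simp only [Pi.add_apply, Pi.smul_apply, smul_eq_mul, h₂, Pi.zero_apply, mul_zero,
    add_zero] at h
  calc _ ≤ 1 + c ^ 2 * μ[X ^ 2|m] ω := h.trans (by gcongr)
    _ ≤ exp (c ^ 2 * μ[X ^ 2|m] ω) := by linarith [add_one_le_exp (c ^ 2 * μ[X ^ 2|m] ω)]

lemma condExp_exp_mul_sub_condExp_sub_le_one [IsFiniteMeasure μ] (hm : m ≤ m0)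
    (hX : AEStronglyMeasurable X μ) (hXR : ∀ᵐ ω ∂μ, |X ω| ≤ R) (hc : |c| * (2 * R) ≤ 1) :
    μ[fun ω => exp (c * (X ω - μ[X|m] ω) - c ^ 2 * μ[X ^ 2|m] ω) | m] ≤ᵐ[μ] 1 := by
  have h_split : (fun ω => exp (c * (X ω - μ[X|m] ω) - c ^ 2 * μ[X ^ 2|m] ω))
      = (fun ω => exp (-(c ^ 2 * μ[X ^ 2|m] ω))) * fun ω => exp (c * (X ω - μ[X|m] ω)) := by
    ext ω; rw [Pi.mul_apply, ← exp_add]; ring_nf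
  have h_nonneg : 0 ≤ᵐ[μ] μ[X ^ 2|m] := condExp_nonneg (.of_forall fun ω => sq_nonneg (X ω))
  have h_pull := condExp_stronglyMeasurable_mul_of_bound hm
    (f := fun ω => exp (-(c ^ 2 * μ[X ^ 2|m] ω)))
    (stronglyMeasurable_condExp.measurable.const_mul _).neg.exp.stronglyMeasurable
    (integrable_exp_mul_sub_condExp hm hX hXR hc) 1 (by
      filter_upwards [h_nonneg] with ω h
      rw [norm_of_nonneg (exp_pos _).le, exp_le_one_iff, neg_nonpos]
      exact mul_nonneg (sq_nonneg c) h)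
  rw [h_split]
  filter_upwards [h_pull, condExp_exp_mul_sub_condExp_le hm hX hXR hc] with ω h₁ h₂
  rw [h₁, Pi.mul_apply, Pi.one_apply]
  calc _ ≤ exp (-(c ^ 2 * μ[X ^ 2|m] ω)) * exp (c ^ 2 * μ[X ^ 2|m] ω) := by gcongr
    _ = 1 := by rw [← exp_add, neg_add_cancel, exp_zero]

end ConditionalBernstein

section

variable {Ω : Type*} {m0 : MeasurableSpace Ω} {μ : Measure Ω}

lemma integrable_prod_and_integral_prod_le_one_of_condExp_le_one [IsProbabilityMeasure μ]
    (ℱ : Filtration ℕ m0) {D : ℕ → Ω → ℝ} {n : ℕ}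
    (hD_meas : ∀ t ∈ Icc 1 n, StronglyMeasurable[ℱ t] (D t))
    (hD_nonneg : ∀ t ∈ Icc 1 n, 0 ≤ D t)
    (hD_bdd : ∀ t ∈ Icc 1 n, ∃ C, ∀ᵐ ω ∂μ, D t ω ≤ C)
    (hD_cond : ∀ t ∈ Icc 1 n, μ[D t | ℱ (t - 1)] ≤ᵐ[μ] 1) :
    Integrable (fun ω => ∏ t ∈ Icc 1 n, D t ω) μ ∧ ∫ ω, ∏ t ∈ Icc 1 n, D t ω ∂μ ≤ 1 := by
  induction n with
  | zero => simp
  | succ n ih =>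
    have hsub : Icc 1 n ⊆ Icc 1 (n + 1) := Icc_subset_Icc_right n.le_succ
    have hn : n + 1 ∈ Icc 1 (n + 1) := by simp
    obtain ⟨hP_int, hP_le⟩ := ih (fun t ht => hD_meas t (hsub ht))
      (fun t ht => hD_nonneg t (hsub ht)) (fun t ht => hD_bdd t (hsub ht))
      (fun t ht => hD_cond t (hsub ht))
    have hP_meas : StronglyMeasurable[ℱ n] fun ω => ∏ t ∈ Icc 1 n, D t ω := by
      refine Finset.stronglyMeasurable_fun_prod _ fun t ht => (hD_meas t (hsub ht)).mono (ℱ.mono ?_)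
      exact (mem_Icc.1 ht).2
    obtain ⟨C, hC⟩ := hD_bdd (n + 1) hn
    have hD_norm : ∀ᵐ ω ∂μ, ‖D (n + 1) ω‖ ≤ C := by
      filter_upwards [hC] with ω h
      rwa [norm_of_nonneg (hD_nonneg _ hn ω)]
    have hD_int : Integrable (D (n + 1)) μ :=
      .of_bound ((hD_meas _ hn).mono (ℱ.le _)).aestronglyMeasurable C hD_norm
    have hPD_int : Integrable ((fun ω => ∏ t ∈ Icc 1 n, D t ω) * D (n + 1)) μ :=
      hP_int.mul_bdd ((hD_meas _ hn).mono (ℱ.le _)).aestronglyMeasurable hD_norm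
    have h_cond := hD_cond (n + 1) hn
    rw [Nat.add_sub_cancel] at h_cond
    simp_rw [prod_Icc_succ_top (Nat.le_add_left 1 n)]
    refine ⟨hPD_int, ?_⟩
    calc ∫ ω, (∏ t ∈ Icc 1 n, D t ω) * D (n + 1) ω ∂μ
        = ∫ ω, μ[(fun ω => ∏ t ∈ Icc 1 n, D t ω) * D (n + 1) | ℱ n] ω ∂μ :=
          (integral_condExp (ℱ.le n)).symm
      _ = ∫ ω, (∏ t ∈ Icc 1 n, D t ω) * μ[D (n + 1) | ℱ n] ω ∂μ :=
          integral_congr_ae (condExp_mul_of_stronglyMeasurable_left hP_meas hPD_int hD_int)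
      _ ≤ ∫ ω, ∏ t ∈ Icc 1 n, D t ω ∂μ := by
          refine integral_mono_of_nonneg ?_ hP_int ?_
          · filter_upwards [condExp_nonneg (m := ℱ n) (.of_forall (hD_nonneg _ hn))] with ω h
            exact mul_nonneg (prod_nonneg fun t ht => hD_nonneg t (hsub ht) ω) h
          · filter_upwards [h_cond] with ω h
            exact mul_le_of_le_one_right (prod_nonneg fun t ht => hD_nonneg t (hsub ht) ω) h
      _ ≤ 1 := hP_le

lemma integrable_exp_sum_and_integral_exp_sum_le_one [IsProbabilityMeasure μ]
    (ℱ : Filtration ℕ m0) {X : ℕ → Ω → ℝ} {R c : ℝ} {n : ℕ}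
    (hX_meas : ∀ t ∈ Icc 1 n, Measurable[ℱ t] (X t))
    (hX_bdd : ∀ t ∈ Icc 1 n, ∀ᵐ ω ∂μ, |X t ω| ≤ R) (hc : |c| * (2 * R) ≤ 1) :
    Integrable (fun ω => exp (c * ∑ t ∈ Icc 1 n, (X t ω - μ[X t|ℱ (t - 1)] ω)
        - c ^ 2 * ∑ t ∈ Icc 1 n, μ[X t ^ 2|ℱ (t - 1)] ω)) μ ∧
      ∫ ω, exp (c * ∑ t ∈ Icc 1 n, (X t ω - μ[X t|ℱ (t - 1)] ω)
        - c ^ 2 * ∑ t ∈ Icc 1 n, μ[X t ^ 2|ℱ (t - 1)] ω) ∂μ ≤ 1 := by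
  have h_prod : (fun ω => exp (c * ∑ t ∈ Icc 1 n, (X t ω - μ[X t|ℱ (t - 1)] ω)
        - c ^ 2 * ∑ t ∈ Icc 1 n, μ[X t ^ 2|ℱ (t - 1)] ω))
      = fun ω => ∏ t ∈ Icc 1 n,
          exp (c * (X t ω - μ[X t|ℱ (t - 1)] ω) - c ^ 2 * μ[X t ^ 2|ℱ (t - 1)] ω) := by
    ext ω
    rw [← exp_sum, mul_sum, mul_sum, ← sum_sub_distrib]
  rw [h_prod]
  refine integrable_prod_and_integral_prod_le_one_of_condExp_le_one ℱ (fun t ht => ?_)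
    (fun t _ ω => (exp_pos _).le) (fun t ht => ⟨exp 1, ?_⟩) (fun t ht => ?_)
  · have h_le : ℱ (t - 1) ≤ ℱ t := ℱ.mono (Nat.sub_le t 1)
    refine Measurable.stronglyMeasurable (Measurable.exp ?_)
    exact ((hX_meas t ht).sub (stronglyMeasurable_condExp.measurable.mono h_le le_rfl)).const_mul c
      |>.sub ((stronglyMeasurable_condExp.measurable.mono h_le le_rfl).const_mul _)
  · filter_upwards [ae_mul_sub_condExp_le_one (m := ℱ (t - 1)) (hX_bdd t ht) hc,
      condExp_nonneg (m := ℱ (t - 1)) (μ := μ) (f := X t ^ 2) (.of_forall fun ω => sq_nonneg _)]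
      with ω h₁ h₂
    exact exp_le_exp.2 (by nlinarith [mul_nonneg (sq_nonneg c) h₂])
  · exact condExp_exp_mul_sub_condExp_sub_le_one (ℱ.le _)
      ((hX_meas t ht).mono (ℱ.le t) le_rfl).aestronglyMeasurable (hX_bdd t ht) hc

lemma measure_ge_le_exp_neg_of_integral_exp_le_one [IsFiniteMeasure μ] {g : Ω → ℝ}
    (hg_int : Integrable (fun ω => exp (g ω)) μ) (hg : ∫ ω, exp (g ω) ∂μ ≤ 1) (ε : ℝ) :
    μ {ω | ε ≤ g ω} ≤ ENNReal.ofReal (exp (-ε)) := by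
  have h := measure_ge_le_exp_mul_mgf (X := g) ε zero_le_one (by simpa using hg_int)
  rw [← ofReal_measureReal]
  refine ENNReal.ofReal_le_ofReal (h.trans ?_)
  simpa [mgf] using mul_le_of_le_one_right (exp_pos _).le hg

lemma ofReal_one_sub_le_measure_of_measure_compl_le [IsProbabilityMeasure μ] {s : Set Ω} {δ : ℝ}
    (hδ : 0 ≤ δ) (hs : μ sᶜ ≤ ENNReal.ofReal δ) : ENNReal.ofReal (1 - δ) ≤ μ s :=
  calc ENNReal.ofReal (1 - δ) = 1 - ENNReal.ofReal δ := by
        rw [ENNReal.ofReal_sub _ hδ, ENNReal.ofReal_one]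
    _ ≤ 1 - μ sᶜ := by gcongr
    _ ≤ μ s := tsub_le_iff_right.2 (measure_univ (μ := μ) ▸ measure_univ_le_add_compl s)

end

lemma abs_le_mul_add_div_of_lt {s v L lam : ℝ} (hlam : 0 < lam)
    (h₁ : lam * s - lam ^ 2 * v < L) (h₂ : -lam * s - (-lam) ^ 2 * v < L) :
    |s| ≤ lam * v + L / lam := by
  have h : lam * (lam * v + L / lam) = lam ^ 2 * v + L := by field_simp
  rw [abs_le]
  constructor <;> nlinarith

theorem freedman_inequality_general
    {Ω : Type*} {m0 : MeasurableSpace Ω} (μ : Measure Ω) [IsProbabilityMeasure μ]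
    (T : ℕ) (𝒜 : ℕ → MeasurableSpace Ω)
    (hmono : ∀ i j, i ≤ j → 𝒜 i ≤ 𝒜 j) (hle : ∀ i, 𝒜 i ≤ m0)
    (X : ℕ → Ω → ℝ) (R : ℝ) (hR : 0 < R)
    (hmeas : ∀ t ∈ Finset.Icc 1 T, Measurable[𝒜 t] (X t))
    (hbdd : ∀ t ∈ Finset.Icc 1 T, ∀ᵐ ω ∂μ, |X t ω| ≤ R)
    (δ : ℝ) (hδ : 0 < δ)
    (lam : ℝ) (hlam : 0 < lam) (hlamR : lam ≤ 1 / (2 * R)) :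
    ENNReal.ofReal (1 - δ) ≤
      μ {ω | |∑ t ∈ Finset.Icc 1 T, (X t ω - (μ[X t | 𝒜 (t - 1)]) ω)|
          ≤ lam * ∑ t ∈ Finset.Icc 1 T,
              (2 * R * |(μ[X t | 𝒜 (t - 1)]) ω|
                + (μ[fun ω' => (X t ω') ^ 2 | 𝒜 (t - 1)]) ω)
            + Real.log (2 / δ) / lam} := by
  let ℱ : Filtration ℕ m0 := ⟨𝒜, fun i j h => hmono i j h, hle⟩
  set S := fun ω => ∑ t ∈ Icc 1 T, (X t ω - μ[X t | 𝒜 (t - 1)] ω)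
  set V := fun ω => ∑ t ∈ Icc 1 T, μ[fun ω' => X t ω' ^ 2 | 𝒜 (t - 1)] ω
  have h_tail (c : ℝ) (hc : |c| * (2 * R) ≤ 1) :
      μ {ω | log (2 / δ) ≤ c * S ω - c ^ 2 * V ω} ≤ ENNReal.ofReal (δ / 2) := by
    obtain ⟨h_int, h_le⟩ := integrable_exp_sum_and_integral_exp_sum_le_one ℱ hmeas hbdd hc
    calc _ ≤ ENNReal.ofReal (exp (-log (2 / δ))) :=
          measure_ge_le_exp_neg_of_integral_exp_le_one h_int h_le _
      _ = ENNReal.ofReal (δ / 2) := by rw [exp_neg, exp_log (by positivity), inv_div]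
  have hc : |lam| * (2 * R) ≤ 1 := by
    rwa [abs_of_pos hlam, ← le_div_iff₀ (by positivity)]
  refine ofReal_one_sub_le_measure_of_measure_compl_le hδ.le ?_
  calc _ ≤ μ ({ω | log (2 / δ) ≤ lam * S ω - lam ^ 2 * V ω}
        ∪ {ω | log (2 / δ) ≤ -lam * S ω - (-lam) ^ 2 * V ω}) := by
        refine measure_mono fun ω hω => ?_
        by_contra h
        simp only [Set.mem_union, Set.mem_ofPred_eq, not_or, not_le] at h
        refine hω ((abs_le_mul_add_div_of_lt hlam h.1 h.2).trans ?_)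
        gcongr
        exact sum_le_sum fun t _ => le_add_of_nonneg_left (by positivity)
    _ ≤ ENNReal.ofReal (δ / 2) + ENNReal.ofReal (δ / 2) :=
        (measure_union_le _ _).trans <|
          add_le_add (h_tail lam hc) (h_tail (-lam) (by rwa [abs_neg]))
    _ = ENNReal.ofReal δ := by rw [← ENNReal.ofReal_add (by positivity) (by positivity), add_halves]

/-- **Freedman-type inequality.** -/
theorem freedman_inequality
    {Ω : Type*} {m0 : MeasurableSpace Ω} (μ : Measure Ω) [IsProbabilityMeasure μ]
    (T : ℕ) (𝒜 : ℕ → MeasurableSpace Ω)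
    (hmono : ∀ i j, i ≤ j → 𝒜 i ≤ 𝒜 j) (hle : ∀ i, 𝒜 i ≤ m0)
    (X : ℕ → Ω → ℝ) (R : ℝ) (hR : 0 < R)
    (hmeas : ∀ t ∈ Finset.Icc 1 T, Measurable[𝒜 t] (X t))
    (hbdd : ∀ t ∈ Finset.Icc 1 T, ∀ᵐ ω ∂μ, |X t ω| ≤ R)
    (δ : ℝ) (hδ : 0 < δ) (hδ1 : δ < 1)
    (lam : ℝ) (hlam : 0 < lam) (hlamR : lam ≤ 1 / (2 * R)) :
    ENNReal.ofReal (1 - δ) ≤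
      μ {ω | |∑ t ∈ Finset.Icc 1 T, (X t ω - (μ[X t | 𝒜 (t - 1)]) ω)|
          ≤ lam * ∑ t ∈ Finset.Icc 1 T,
              (2 * R * |(μ[X t | 𝒜 (t - 1)]) ω|
                + (μ[fun ω' => (X t ω') ^ 2 | 𝒜 (t - 1)]) ω)
            + Real.log (2 / δ) / lam} :=
  freedman_inequality_general μ T 𝒜 hmono hle X R hR hmeas hbdd δ hδ lam hlam hlamR
end

section
/- Linear feature coverage bound: Let Z be a finite nonempty set, φ : Z → ℝ^d a feature map, and let d and ν be probability distributions on Z such that the feature covariance matrix Σ_ν := Σ_z ν(z)·φ(z)·φ(z)ᵀ is positive definite (hence invertible). Then for every nonzero u ∈ ℝ^d: ( Σ_z d(z)·⟨u, φ(z)⟩² ) / ( Σ_z ν(z)·⟨u, φ(z)⟩² ) ≤ Σ_z d(z)·( φ(z)ᵀ Σ_ν⁻¹ φ(z) ), where the denominator Σ_z ν(z)·⟨u, φ(z)⟩² = uᵀ Σ_ν u is strictly positive. -/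
/-!
By Cauchy–Schwarz for the inner product `⟨a, b⟩_Σ = aᵀ Σ b` applied to `u` and `Σ⁻¹ φ(z)`,
`⟨u, φ(z)⟩² ≤ (uᵀ Σ u) · (φ(z)ᵀ Σ⁻¹ φ(z))`. Averaging over `z ∼ d` and noting that
`uᵀ Σ_ν u = Σ_z ν(z) ⟨u, φ(z)⟩²` gives the bound.
-/

open Finset Matrix

namespace Matrix

variable {ι Z : Type*} [Fintype ι]

lemma PosSemidef.dotProduct_mulVec_sq_le {M : Matrix ι ι ℝ} (hM : M.PosSemidef)
    (x y : ι → ℝ) : (x ⬝ᵥ M *ᵥ y) ^ 2 ≤ (x ⬝ᵥ M *ᵥ x) * (y ⬝ᵥ M *ᵥ y) := by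
  classical
  have hsymm : LinearMap.IsSymm M.toBilin' := LinearMap.BilinForm.isSymm_iff.1 <|
    isSymm_toBilin'_iff_isSymm.2 (isHermitian_iff_isSymm.1 hM.isHermitian)
  have hnonneg (v : ι → ℝ) : 0 ≤ M.toBilin' v v := by
    simpa only [toBilin'_apply', star_trivial] using hM.dotProduct_mulVec_nonneg v
  simpa only [toBilin'_apply'] using M.toBilin'.apply_sq_le_of_symm hnonneg hsymm x y

lemma PosDef.sq_dotProduct_le [DecidableEq ι] {S : Matrix ι ι ℝ} (hS : S.PosDef)
    (u x : ι → ℝ) : (u ⬝ᵥ x) ^ 2 ≤ (u ⬝ᵥ S *ᵥ u) * (x ⬝ᵥ S⁻¹ *ᵥ x) := by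
  have hx : S *ᵥ (S⁻¹ *ᵥ x) = x := by
    rw [mulVec_mulVec, mul_nonsing_inv _ (isUnit_iff_isUnit_det S |>.1 hS.isUnit), one_mulVec]
  have h := hS.posSemidef.dotProduct_mulVec_sq_le u (S⁻¹ *ᵥ x)
  rwa [hx, dotProduct_comm (S⁻¹ *ᵥ x)] at h

lemma dotProduct_sum_smul_vecMulVec_self_mulVec [Fintype Z] (w : Z → ℝ) (φ : Z → ι → ℝ)
    (v : ι → ℝ) :
    v ⬝ᵥ (∑ z, w z • vecMulVec (φ z) (φ z)) *ᵥ v = ∑ z, w z * (v ⬝ᵥ φ z) ^ 2 := by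
  simp only [sum_mulVec, dotProduct_sum, smul_mulVec, vecMulVec_mulVec, dotProduct_smul]
  refine sum_congr rfl fun z _ => ?_
  simp only [op_smul_eq_smul, smul_eq_mul, dotProduct_comm (φ z) v]
  ring

end Matrix

theorem linear_feature_coverage_general
    {Z : Type*} [Fintype Z]
    (dim : ℕ) (φ : Z → Fin dim → ℝ)
    (d ν : Z → ℝ)
    (hdnn : ∀ z, 0 ≤ d z)
    (hpd : (∑ z, ν z • Matrix.vecMulVec (φ z) (φ z)).PosDef) :
    ∀ u : Fin dim → ℝ, u ≠ 0 →
      (0 < ∑ z, ν z * (u ⬝ᵥ φ z) ^ 2) ∧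
      (∑ z, d z * (u ⬝ᵥ φ z) ^ 2) / (∑ z, ν z * (u ⬝ᵥ φ z) ^ 2)
        ≤ ∑ z, d z *
            (φ z ⬝ᵥ (∑ z', ν z' • Matrix.vecMulVec (φ z') (φ z'))⁻¹ *ᵥ φ z) := by
  intro u hu
  set S := ∑ z, ν z • vecMulVec (φ z) (φ z)
  have hquad : u ⬝ᵥ S *ᵥ u = ∑ z, ν z * (u ⬝ᵥ φ z) ^ 2 :=
    dotProduct_sum_smul_vecMulVec_self_mulVec ν φ u
  have hpos : 0 < ∑ z, ν z * (u ⬝ᵥ φ z) ^ 2 := by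
    simpa [hquad] using hpd.dotProduct_mulVec_pos hu
  refine ⟨hpos, (div_le_iff₀ hpos).2 ?_⟩
  calc ∑ z, d z * (u ⬝ᵥ φ z) ^ 2
      ≤ ∑ z, d z * ((u ⬝ᵥ S *ᵥ u) * (φ z ⬝ᵥ S⁻¹ *ᵥ φ z)) :=
        sum_le_sum fun z _ => mul_le_mul_of_nonneg_left (hpd.sq_dotProduct_le u (φ z)) (hdnn z)
    _ = (∑ z, d z * (φ z ⬝ᵥ S⁻¹ *ᵥ φ z)) * ∑ z, ν z * (u ⬝ᵥ φ z) ^ 2 := by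
        rw [← hquad, sum_mul]
        exact sum_congr rfl fun z _ => by ring

/-- **Linear feature coverage bound.** -/
theorem linear_feature_coverage
    {Z : Type*} [Fintype Z] [Nonempty Z]
    (dim : ℕ) (φ : Z → Fin dim → ℝ)
    (d ν : Z → ℝ)
    (hdnn : ∀ z, 0 ≤ d z) (hdsum : ∑ z, d z = 1)
    (hνnn : ∀ z, 0 ≤ ν z) (hνsum : ∑ z, ν z = 1)
    (hpd : (∑ z, ν z • Matrix.vecMulVec (φ z) (φ z)).PosDef) :
    ∀ u : Fin dim → ℝ, u ≠ 0 →
      (0 < ∑ z, ν z * (u ⬝ᵥ φ z) ^ 2) ∧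
      (∑ z, d z * (u ⬝ᵥ φ z) ^ 2) / (∑ z, ν z * (u ⬝ᵥ φ z) ^ 2)
        ≤ ∑ z, d z *
            (φ z ⬝ᵥ (∑ z', ν z' • Matrix.vecMulVec (φ z') (φ z'))⁻¹ *ᵥ φ z) :=
  linear_feature_coverage_general dim φ d ν hdnn hpd
end
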